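/- For every 2-bounded coloring f : [ℕ]^{!ω} → ℕ there exists a coloring g : [ℕ]^{!ω} → ℕ such that every infinite set A ⊆ ℕ that is free for g is a rainbow for f. -/

import Mathlib

/-- A finite set `s ⊆ ℕ` is exactly ω-large if `|s| = 1 + min s`. -/
def ExLarge (s : Finset ℕ) : Prop :=
  s.Nonempty ∧ s.card = 1 + sInf (↑s : Set ℕ)

/-- `f : [ℕ]^{!ω} → ℕ` is `k`-bounded: every color has at most `k`
exactly ω-large preimages. -/
def KBoundedL (k : ℕ) (f : Finset ℕ → ℕ) : Prop :=
  ∀ c : ℕ, ∃ T : Finset (Finset ℕ), T.card ≤ k ∧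
    ∀ u : Finset ℕ, ExLarge u → f u = c → u ∈ T

/-- `H` is free for `g : [ℕ]^{!ω} → ℕ`. -/
def FreeL (g : Finset ℕ → ℕ) (H : Set ℕ) : Prop :=
  ∀ s : Finset ℕ, ExLarge s → ↑s ⊆ H → g s ∈ H → g s ∈ s

/-- `H` is a rainbow for `f : [ℕ]^{!ω} → ℕ`: `f` is injective on `[H]^{!ω}`. -/
def RainbowL (f : Finset ℕ → ℕ) (H : Set ℕ) : Prop :=
  ∀ s t : Finset ℕ, ExLarge s → ExLarge t → ↑s ⊆ H → ↑t ⊆ H → f s = f t → s = t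

/-!
Let `g s` be a point of `t \ s`, where `t` is an exactly ω-large set of the same `f`-color as `s`
not contained in `s`. Since `f` is 2-bounded, such a `t` is unique, so if `s` and `t` both lie in a
`g`-free set `A`, then `g s ∈ t ⊆ A` forces `g s ∈ s`, which is absurd. Hence two exactly ω-large
subsets of `A` of the same color are contained in each other, that is, they are equal.
-/

open Finset

lemma Finset.eq_of_mem_of_card_le_two {α : Type*} {T : Finset α} (hT : #T ≤ 2) {a b c : α}
    (ha : a ∈ T) (hb : b ∈ T) (hc : c ∈ T) (hba : b ≠ a) (hca : c ≠ a) : b = c := by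
  by_contra hbc
  have := two_lt_card.2 ⟨a, ha, b, hb, c, hc, hba.symm, hca.symm, hbc⟩
  omega

noncomputable def separatingPoint (f : Finset ℕ → ℕ) (s : Finset ℕ) : ℕ :=
  Classical.epsilon fun x => ∃ t, ExLarge t ∧ f t = f s ∧ x ∈ t \ s

lemma separatingPoint_mem_sdiff {f : Finset ℕ → ℕ} (hf : KBoundedL 2 f) {s t : Finset ℕ}
    (hs : ExLarge s) (ht : ExLarge t) (hst : f s = f t) {x : ℕ} (hx : x ∈ t \ s) :
    separatingPoint f s ∈ t \ s := by
  obtain ⟨u, hu, hfu, hmem⟩ := Classical.epsilon_spec (p := fun x => ∃ t, ExLarge t ∧ f t = f s ∧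
    x ∈ t \ s) ⟨x, t, ht, hst.symm, hx⟩
  obtain ⟨T, hT, hcolor⟩ := hf (f s)
  have hne : ∀ {v : Finset ℕ} {y : ℕ}, y ∈ v \ s → v ≠ s := by
    rintro v y hy rfl
    simp at hy
  have hut : u = t := eq_of_mem_of_card_le_two hT (hcolor s hs rfl) (hcolor u hu hfu)
    (hcolor t ht hst.symm) (hne hmem) (hne hx)
  exact hut ▸ hmem

lemma subset_of_freeL_separatingPoint {f : Finset ℕ → ℕ} (hf : KBoundedL 2 f) {A : Set ℕ}
    (hA : FreeL (separatingPoint f) A) {s t : Finset ℕ} (hs : ExLarge s) (ht : ExLarge t)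
    (hsA : ↑s ⊆ A) (htA : ↑t ⊆ A) (hst : f s = f t) : t ⊆ s := by
  by_contra hts
  obtain ⟨x, hxt, hxs⟩ := not_subset.1 hts
  have hsep := mem_sdiff.1 (separatingPoint_mem_sdiff hf hs ht hst (mem_sdiff.2 ⟨hxt, hxs⟩))
  exact hsep.2 (hA s hs hsA (htA hsep.1))

/-- for every 2-bounded `f : [ℕ]^{!ω} → ℕ` there exists
`g : [ℕ]^{!ω} → ℕ` such that every infinite `g`-free set is an `f`-rainbow. -/
theorem stmt11 (f : Finset ℕ → ℕ) (hf : KBoundedL 2 f) :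
    ∃ g : Finset ℕ → ℕ,
      ∀ A : Set ℕ, A.Infinite → FreeL g A → RainbowL f A :=
  ⟨separatingPoint f, fun _ _ hA _ _ hs ht hsA htA hst =>
    Subset.antisymm (subset_of_freeL_separatingPoint hf hA ht hs htA hsA hst.symm)
      (subset_of_freeL_separatingPoint hf hA hs ht hsA htA hst)⟩
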